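/- Let f : G × G → ℝ be a smooth left invariant cost function and let the Riemannian metric on G be left invariant. Let u be an admissible input, let X solve the left invariant system Ẋ = Xu, and let X̂ solve the left gradient observer X̂̇ = X̂u − grad₁ f(X̂, X). Then the canonical left invariant error E_l(t) = X(t)⁻¹X̂(t) satisfies Ė_l = (T_e L_{E_l} − T_e R_{E_l}) u − grad₁ f(E_l, e), i.e. Ė_l = (E_l u − u E_l) − grad₁ f(E_l, e). Analogously, for a right invariant f and metric, the right invariant system Ẋ = vX and the right gradient observer X̂̇ = vX̂ − grad₁ f(X̂, X), the canonical right invariant error E_r(t) = X̂(t)X(t)⁻¹ satisfies Ė_r = (v E_r − E_r v) − grad₁ f(E_r, e). -/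

import Mathlib

open scoped Manifold
open Filter Topology

/-- `TransL I a b` is the tangent map `T_b L_a` of left translation `L_a : g ↦ a * g`
at the point `b`, with all tangent spaces of the Lie group canonically identified
with the model space `E`. -/
noncomputable def TransL {E : Type*} [NormedAddCommGroup E] [NormedSpace ℝ E]
    {H : Type*} [TopologicalSpace H] (I : ModelWithCorners ℝ E H)
    {G : Type*} [TopologicalSpace G] [ChartedSpace H G] [Group G]
    (a b : G) : E →L[ℝ] E :=
  mfderiv I I (fun g => a * g) b

/-- `TransR I a b` is the tangent map `T_b R_a` of right translation `R_a : g ↦ g * a`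
at the point `b`. -/
noncomputable def TransR {E : Type*} [NormedAddCommGroup E] [NormedSpace ℝ E]
    {H : Type*} [TopologicalSpace H] (I : ModelWithCorners ℝ E H)
    {G : Type*} [TopologicalSpace G] [ChartedSpace H G] [Group G]
    (a b : G) : E →L[ℝ] E :=
  mfderiv I I (fun g => g * a) b

/-- `cVel I X t` is the velocity `Ẋ(t)` of the curve `X : ℝ → G`. -/
noncomputable def cVel {E : Type*} [NormedAddCommGroup E] [NormedSpace ℝ E]
    {H : Type*} [TopologicalSpace H] (I : ModelWithCorners ℝ E H)
    {G : Type*} [TopologicalSpace G] [ChartedSpace H G]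
    (X : ℝ → G) (t : ℝ) : E :=
  mfderiv 𝓘(ℝ) I X t (1 : ℝ)

/-- The curve `X` is a (smooth, globally defined) solution of the left invariant
system `Ẋ = Xu` with input `u : ℝ → 𝔤` (the Lie algebra `𝔤 = T_eG` being
identified with the model space `E`). -/
def SolLeftInvSys {E : Type*} [NormedAddCommGroup E] [NormedSpace ℝ E]
    {H : Type*} [TopologicalSpace H] (I : ModelWithCorners ℝ E H)
    {G : Type*} [TopologicalSpace G] [ChartedSpace H G] [Group G]
    (u : ℝ → E) (X : ℝ → G) : Prop :=
  ContMDiff 𝓘(ℝ) I (⊤ : ℕ∞) X ∧ ∀ t, cVel I X t = TransL I (X t) 1 (u t)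

/-- The curve `X` is a (smooth, globally defined) solution of the right invariant
system `Ẋ = vX` with input `v : ℝ → 𝔤`. -/
def SolRightInvSys {E : Type*} [NormedAddCommGroup E] [NormedSpace ℝ E]
    {H : Type*} [TopologicalSpace H] (I : ModelWithCorners ℝ E H)
    {G : Type*} [TopologicalSpace G] [ChartedSpace H G] [Group G]
    (v : ℝ → E) (X : ℝ → G) : Prop :=
  ContMDiff 𝓘(ℝ) I (⊤ : ℕ∞) X ∧ ∀ t, cVel I X t = TransR I (X t) 1 (v t)

/-- `dFst I f X Y η` is the differential `d₁f(X,Y)(η)` of the cost `f` with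
respect to its first argument, applied to the tangent vector `η ∈ T_X G`. -/
noncomputable def dFst {E : Type*} [NormedAddCommGroup E] [NormedSpace ℝ E]
    {H : Type*} [TopologicalSpace H] (I : ModelWithCorners ℝ E H)
    {G : Type*} [TopologicalSpace G] [ChartedSpace H G]
    (f : G → G → ℝ) (X Y : G) (η : E) : ℝ :=
  mfderiv I 𝓘(ℝ) (fun Z => f Z Y) X η

/-- `m` is (pointwise) a Riemannian metric on `G`: a symmetric positive definite
bilinear form on each tangent space (identified with the model space `E`). -/
def IsRiemMetric {E : Type*} [NormedAddCommGroup E] [NormedSpace ℝ E]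
    {G : Type*} (m : G → E →ₗ[ℝ] E →ₗ[ℝ] ℝ) : Prop :=
  (∀ (x : G) (v w : E), m x v w = m x w v) ∧ (∀ (x : G) (v : E), v ≠ 0 → 0 < m x v v)

/-- The Riemannian metric `m` is left invariant: every left translation is an
isometry. -/
def LeftInvMetric {E : Type*} [NormedAddCommGroup E] [NormedSpace ℝ E]
    {H : Type*} [TopologicalSpace H] (I : ModelWithCorners ℝ E H)
    {G : Type*} [TopologicalSpace G] [ChartedSpace H G] [Group G]
    (m : G → E →ₗ[ℝ] E →ₗ[ℝ] ℝ) : Prop :=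
  ∀ (S x : G) (v w : E), m (S * x) (TransL I S x v) (TransL I S x w) = m x v w

/-- The Riemannian metric `m` is right invariant: every right translation is an
isometry. -/
def RightInvMetric {E : Type*} [NormedAddCommGroup E] [NormedSpace ℝ E]
    {H : Type*} [TopologicalSpace H] (I : ModelWithCorners ℝ E H)
    {G : Type*} [TopologicalSpace G] [ChartedSpace H G] [Group G]
    (m : G → E →ₗ[ℝ] E →ₗ[ℝ] ℝ) : Prop :=
  ∀ (S x : G) (v w : E), m (x * S) (TransR I S x v) (TransR I S x w) = m x v w

/-- The cost `f : G × G → ℝ` is left invariant. -/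
def LeftInvCost {G : Type*} [Group G] (f : G → G → ℝ) : Prop :=
  ∀ S X Y : G, f (S * X) (S * Y) = f X Y

/-- The cost `f : G × G → ℝ` is right invariant. -/
def RightInvCost {G : Type*} [Group G] (f : G → G → ℝ) : Prop :=
  ∀ S X Y : G, f (X * S) (Y * S) = f X Y

/-- `gradf X Y = grad₁ f(X,Y) ∈ T_X G` is the Riemannian gradient of the cost `f`
with respect to its first argument, characterised by
`⟨grad₁ f(X,Y), η⟩ = d₁f(X,Y)(η)` for all `η ∈ T_X G`. -/
def IsGradFst {E : Type*} [NormedAddCommGroup E] [NormedSpace ℝ E]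
    {H : Type*} [TopologicalSpace H] (I : ModelWithCorners ℝ E H)
    {G : Type*} [TopologicalSpace G] [ChartedSpace H G]
    (m : G → E →ₗ[ℝ] E →ₗ[ℝ] ℝ) (f : G → G → ℝ) (gradf : G → G → E) : Prop :=
  ∀ (X Y : G) (η : E), m X (gradf X Y) η = dFst I f X Y η

/-- The curve `X̂` is a (smooth, globally defined) solution of the left gradient
observer `X̂̇ = X̂u − grad₁ f(X̂, X)` (with exact measurements `Y = X`, `w = u`). -/
def SolLeftGradObs {E : Type*} [NormedAddCommGroup E] [NormedSpace ℝ E]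
    {H : Type*} [TopologicalSpace H] (I : ModelWithCorners ℝ E H)
    {G : Type*} [TopologicalSpace G] [ChartedSpace H G] [Group G]
    (gradf : G → G → E) (u : ℝ → E) (X Xh : ℝ → G) : Prop :=
  ContMDiff 𝓘(ℝ) I (⊤ : ℕ∞) Xh ∧
    ∀ t, cVel I Xh t = TransL I (Xh t) 1 (u t) - gradf (Xh t) (X t)

/-- The curve `X̂` is a (smooth, globally defined) solution of the right gradient
observer `X̂̇ = vX̂ − grad₁ f(X̂, X)` (with exact measurements `Y = X`, `w = v`). -/
def SolRightGradObs {E : Type*} [NormedAddCommGroup E] [NormedSpace ℝ E]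
    {H : Type*} [TopologicalSpace H] (I : ModelWithCorners ℝ E H)
    {G : Type*} [TopologicalSpace G] [ChartedSpace H G] [Group G]
    (gradf : G → G → E) (v : ℝ → E) (X Xh : ℝ → G) : Prop :=
  ContMDiff 𝓘(ℝ) I (⊤ : ℕ∞) Xh ∧
    ∀ t, cVel I Xh t = TransR I (Xh t) 1 (v t) - gradf (Xh t) (X t)

set_option linter.unusedSectionVars false

section auxGradObs

variable {E : Type*} [NormedAddCommGroup E] [NormedSpace ℝ E]
  {H : Type*} [TopologicalSpace H] {I : ModelWithCorners ℝ E H}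
  {G : Type*} [TopologicalSpace G] [ChartedSpace H G] [Group G] [LieGroup I (⊤ : ℕ∞) G]

lemma transL_comp (a b c : G) :
    (TransL I a (b * c)).comp (TransL I b c) = TransL I (a * b) c := by
  have h := mfderiv_comp (I' := I) c (mdifferentiableAt_mul_left (a := a) (b := b * c))
    (mdifferentiableAt_mul_left (a := b) (b := c))
  have hfun : ((a * ·) ∘ (b * ·)) = ((a * b) * ·) := by
    ext g; simp [Function.comp, mul_assoc]
  rw [hfun] at h
  exact h.symm

lemma transL_one (c : G) : TransL I (1 : G) c = ContinuousLinearMap.id ℝ E := by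
  have hfun : (fun g : G => (1 : G) * g) = id := by ext g; simp
  rw [TransL, hfun, mfderiv_id]
  rfl

lemma transR_comp (a b c : G) :
    (TransR I a (c * b)).comp (TransR I b c) = TransR I (b * a) c := by
  have h := mfderiv_comp (I' := I) c (mdifferentiableAt_mul_right (a := a) (b := c * b))
    (mdifferentiableAt_mul_right (a := b) (b := c))
  have hfun : ((· * a) ∘ (· * b)) = (· * (b * a)) := by
    ext g; simp [Function.comp, mul_assoc]
  rw [hfun] at h
  exact h.symm

lemma transR_one (c : G) : TransR I (1 : G) c = ContinuousLinearMap.id ℝ E := by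
  have hfun : (fun g : G => g * (1 : G)) = id := by ext g; simp
  rw [TransR, hfun, mfderiv_id]
  rfl

lemma transLR_comm (a b c : G) :
    (TransL I a (c * b)).comp (TransR I b c) = (TransR I b (a * c)).comp (TransL I a c) := by
  have h1 := mfderiv_comp (I' := I) c (mdifferentiableAt_mul_left (a := a) (b := c * b))
    (mdifferentiableAt_mul_right (a := b) (b := c))
  have h2 := mfderiv_comp (I' := I) c (mdifferentiableAt_mul_right (a := b) (b := a * c))
    (mdifferentiableAt_mul_left (a := a) (b := c))
  have hfun : ((a * ·) ∘ (· * b)) = ((· * b) ∘ (a * ·)) := by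
    ext g; simp [Function.comp, mul_assoc]
  rw [hfun] at h1
  exact h1.symm.trans h2

lemma transL_cancel (a c : G) (v : E) :
    TransL I a⁻¹ (a * c) (TransL I a c v) = v := by
  have := transL_comp (I := I) a⁻¹ a c
  rw [inv_mul_cancel, transL_one] at this
  have := congrArg (fun (T : E →L[ℝ] E) => T v) this
  simpa using this

lemma transL_inj (a c : G) {v w : E} (h : TransL I a c v = TransL I a c w) : v = w := by
  have := congrArg (TransL I a⁻¹ (a * c)) h
  rwa [transL_cancel, transL_cancel] at this

lemma transL_surj (a c : G) (η : E) : ∃ ξ : E, TransL I a c ξ = η := by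
  refine ⟨TransL I a⁻¹ (a * c) η, ?_⟩
  have := transL_comp (I := I) a a⁻¹ (a * c)
  rw [mul_inv_cancel, transL_one] at this
  have h2 := congrArg (fun (T : E →L[ℝ] E) => T η) this
  simp only [ContinuousLinearMap.coe_comp', Function.comp_apply,
    ContinuousLinearMap.coe_id', id_eq] at h2
  rwa [inv_mul_cancel_left] at h2

lemma transR_cancel (a c : G) (v : E) :
    TransR I a⁻¹ (c * a) (TransR I a c v) = v := by
  have := transR_comp (I := I) a⁻¹ a c
  rw [mul_inv_cancel, transR_one] at this
  have := congrArg (fun (T : E →L[ℝ] E) => T v) this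
  simpa using this

lemma transR_inj (a c : G) {v w : E} (h : TransR I a c v = TransR I a c w) : v = w := by
  have := congrArg (TransR I a⁻¹ (c * a)) h
  rwa [transR_cancel, transR_cancel] at this

lemma transR_surj (a c : G) (η : E) : ∃ ξ : E, TransR I a c ξ = η := by
  refine ⟨TransR I a⁻¹ (c * a) η, ?_⟩
  have := transR_comp (I := I) a a⁻¹ (c * a)
  rw [inv_mul_cancel, transR_one] at this
  have h2 := congrArg (fun (T : E →L[ℝ] E) => T η) this
  simp only [ContinuousLinearMap.coe_comp', Function.comp_apply,
    ContinuousLinearMap.coe_id', id_eq] at h2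
  rwa [mul_inv_cancel_right] at h2

lemma cVel_mul (A B : ℝ → G) (hA : ContMDiff 𝓘(ℝ) I (⊤ : ℕ∞) A) (hB : ContMDiff 𝓘(ℝ) I (⊤ : ℕ∞) B) (t : ℝ) :
    cVel I (fun s => A s * B s) t
      = TransR I (B t) (A t) (cVel I A t) + TransL I (A t) (B t) (cVel I B t) := by
  set μ : G × G → G := fun p => p.1 * p.2 with hμdef
  have hμ : MDifferentiableAt (I.prod I) I μ (A t, B t) :=
    ((contMDiff_mul I (⊤ : ℕ∞) (G := G)) (A t, B t)).mdifferentiableAt (by simp)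
  have hP : MDifferentiableAt 𝓘(ℝ) (I.prod I) (fun s => (A s, B s)) t :=
    ((hA t).prodMk (hB t)).mdifferentiableAt (by simp)
  have hAd : MDifferentiableAt 𝓘(ℝ) I A t := (hA t).mdifferentiableAt (by simp)
  have hBd : MDifferentiableAt 𝓘(ℝ) I B t := (hB t).mdifferentiableAt (by simp)
  have hcomp := mfderiv_comp (I' := I.prod I) t hμ hP
  have hpair := hAd.mfderiv_prod hBd
  have hmain : cVel I (fun s => A s * B s) t
      = mfderiv (I.prod I) I μ (A t, B t) (cVel I A t, cVel I B t) := by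
    have hfun : (fun s => A s * B s) = μ ∘ (fun s => (A s, B s)) := rfl
    rw [cVel, hfun, hcomp, hpair]
    rfl
  have hl : ∀ v : E, mfderiv (I.prod I) I μ (A t, B t) (v, 0) = TransR I (B t) (A t) v := by
    intro v
    have hpl : MDifferentiableAt I (I.prod I) (fun g : G => (g, B t)) (A t) :=
      mdifferentiableAt_id.prodMk mdifferentiableAt_const
    have h := mfderiv_comp (I' := I.prod I) (A t) hμ hpl
    have hfun : μ ∘ (fun g : G => (g, B t)) = (· * B t) := rfl
    rw [hfun, mfderiv_prod_left] at h
    have := congrArg (fun (T : E →L[ℝ] E) => T v) h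
    rw [TransR]
    exact this.symm
  have hr : ∀ w : E, mfderiv (I.prod I) I μ (A t, B t) (0, w) = TransL I (A t) (B t) w := by
    intro w
    have hpr : MDifferentiableAt I (I.prod I) (fun g : G => (A t, g)) (B t) :=
      mdifferentiableAt_const.prodMk mdifferentiableAt_id
    have h := mfderiv_comp (I' := I.prod I) (B t) hμ hpr
    have hfun : μ ∘ (fun g : G => (A t, g)) = (A t * ·) := rfl
    rw [hfun, mfderiv_prod_right] at h
    have := congrArg (fun (T : E →L[ℝ] E) => T w) h
    rw [TransL]
    exact this.symm
  have hsplit : (cVel I A t, cVel I B t)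
      = ((cVel I A t, (0 : E)) : E × E) + ((0 : E), cVel I B t) := by
    simp
  have hadd := ContinuousLinearMap.map_add (mfderiv (I.prod I) I μ (A t, B t))
    ((cVel I A t, (0 : E)) : E × E) ((0 : E), cVel I B t)
  rw [hl, hr] at hadd
  rw [hmain, hsplit]
  exact hadd

lemma dFst_transL {f : G → G → ℝ}
    (hf : ContMDiff (I.prod I) 𝓘(ℝ) (⊤ : ℕ∞) (fun p : G × G => f p.1 p.2))
    (hfL : LeftInvCost f) (a X Y : G) (ξ : E) :
    dFst I f (a * X) (a * Y) (TransL I a X ξ) = dFst I f X Y ξ := by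
  have h1 : MDifferentiableAt I 𝓘(ℝ) (fun Z => f Z (a * Y)) (a * X) := by
    have h2 : ContMDiff I 𝓘(ℝ) (⊤ : ℕ∞) ((fun p : G × G => f p.1 p.2) ∘ fun Z : G => (Z, a * Y)) :=
      hf.comp (contMDiff_id.prodMk contMDiff_const)
    exact (h2 (a * X)).mdifferentiableAt (by simp)
  have h := mfderiv_comp (I' := I) X h1 (mdifferentiableAt_mul_left (a := a) (b := X))
  have hfun : ((fun Z => f Z (a * Y)) ∘ (a * ·)) = fun Z => f Z Y := by
    ext Z; exact hfL a Z Y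
  rw [hfun] at h
  have h3 := congrArg (fun (T : E →L[ℝ] ℝ) => T ξ) h
  rw [dFst, dFst, TransL]
  exact h3.symm

lemma dFst_transR {f : G → G → ℝ}
    (hf : ContMDiff (I.prod I) 𝓘(ℝ) (⊤ : ℕ∞) (fun p : G × G => f p.1 p.2))
    (hfR : RightInvCost f) (a X Y : G) (ξ : E) :
    dFst I f (X * a) (Y * a) (TransR I a X ξ) = dFst I f X Y ξ := by
  have h1 : MDifferentiableAt I 𝓘(ℝ) (fun Z => f Z (Y * a)) (X * a) := by
    have h2 : ContMDiff I 𝓘(ℝ) (⊤ : ℕ∞) ((fun p : G × G => f p.1 p.2) ∘ fun Z : G => (Z, Y * a)) :=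
      hf.comp (contMDiff_id.prodMk contMDiff_const)
    exact (h2 (X * a)).mdifferentiableAt (by simp)
  have h := mfderiv_comp (I' := I) X h1 (mdifferentiableAt_mul_right (a := a) (b := X))
  have hfun : ((fun Z => f Z (Y * a)) ∘ (· * a)) = fun Z => f Z Y := by
    ext Z; exact hfR a Z Y
  rw [hfun] at h
  have h3 := congrArg (fun (T : E →L[ℝ] ℝ) => T ξ) h
  rw [dFst, dFst, TransR]
  exact h3.symm

lemma grad_eqv_left {f : G → G → ℝ} {m : G → E →ₗ[ℝ] E →ₗ[ℝ] ℝ} {gradf : G → G → E}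
    (hf : ContMDiff (I.prod I) 𝓘(ℝ) (⊤ : ℕ∞) (fun p : G × G => f p.1 p.2))
    (hm : IsRiemMetric m) (hgrad : IsGradFst I m f gradf)
    (hfL : LeftInvCost f) (hmL : LeftInvMetric I m) (a X Y : G) :
    gradf (a * X) (a * Y) = TransL I a X (gradf X Y) := by
  have key : ∀ η : E, m (a * X) (gradf (a * X) (a * Y)) η
      = m (a * X) (TransL I a X (gradf X Y)) η := by
    intro η
    obtain ⟨ξ, rfl⟩ := transL_surj (I := I) a X η
    rw [hgrad, dFst_transL hf hfL, hmL, hgrad]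
  by_contra hne
  have hd : gradf (a * X) (a * Y) - TransL I a X (gradf X Y) ≠ 0 := sub_ne_zero.mpr hne
  have hpos := hm.2 (a * X) _ hd
  set d := gradf (a * X) (a * Y) - TransL I a X (gradf X Y) with hddef
  have hsw : m (a * X) d (gradf (a * X) (a * Y)) = m (a * X) d (TransL I a X (gradf X Y)) := by
    rw [hm.1 _ d (gradf (a * X) (a * Y)), hm.1 _ d (TransL I a X (gradf X Y)), key d]
  have hzero : m (a * X) d d = 0 := by
    rw [hddef, map_sub, hsw, sub_self]
  rw [hzero] at hpos
  exact lt_irrefl 0 hpos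

lemma grad_eqv_right {f : G → G → ℝ} {m : G → E →ₗ[ℝ] E →ₗ[ℝ] ℝ} {gradf : G → G → E}
    (hf : ContMDiff (I.prod I) 𝓘(ℝ) (⊤ : ℕ∞) (fun p : G × G => f p.1 p.2))
    (hm : IsRiemMetric m) (hgrad : IsGradFst I m f gradf)
    (hfR : RightInvCost f) (hmR : RightInvMetric I m) (a X Y : G) :
    gradf (X * a) (Y * a) = TransR I a X (gradf X Y) := by
  have key : ∀ η : E, m (X * a) (gradf (X * a) (Y * a)) η
      = m (X * a) (TransR I a X (gradf X Y)) η := by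
    intro η
    obtain ⟨ξ, rfl⟩ := transR_surj (I := I) a X η
    rw [hgrad, dFst_transR hf hfR, hmR, hgrad]
  by_contra hne
  have hd : gradf (X * a) (Y * a) - TransR I a X (gradf X Y) ≠ 0 := sub_ne_zero.mpr hne
  have hpos := hm.2 (X * a) _ hd
  set d := gradf (X * a) (Y * a) - TransR I a X (gradf X Y) with hddef
  have hsw : m (X * a) d (gradf (X * a) (Y * a)) = m (X * a) d (TransR I a X (gradf X Y)) := by
    rw [hm.1 _ d (gradf (X * a) (Y * a)), hm.1 _ d (TransR I a X (gradf X Y)), key d]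
  have hzero : m (X * a) d d = 0 := by
    rw [hddef, map_sub, hsw, sub_self]
  rw [hzero] at hpos
  exact lt_irrefl 0 hpos

end auxGradObs

/- STATEMENT 9: for a left invariant cost `f` and left invariant Riemannian
metric, along solutions of the left invariant system `Ẋ = Xu` and of the left
gradient observer `X̂̇ = X̂u − grad₁ f(X̂, X)`, the canonical left invariant error
`E_l(t) = X(t)⁻¹X̂(t)` satisfies
`Ė_l = (T_eL_{E_l} − T_eR_{E_l})u − grad₁ f(E_l, e) = (E_l u − u E_l) − grad₁ f(E_l, e)`.
Analogously, for a right invariant cost and metric, the right invariant system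
`Ẋ = vX` and the right gradient observer `X̂̇ = vX̂ − grad₁ f(X̂, X)`, the
canonical right invariant error `E_r(t) = X̂(t)X(t)⁻¹` satisfies
`Ė_r = (T_eR_{E_r} − T_eL_{E_r})v − grad₁ f(E_r, e) = (v E_r − E_r v) − grad₁ f(E_r, e)`. -/
theorem gradient_observer_other_error_dynamics
    {E : Type*} [NormedAddCommGroup E] [NormedSpace ℝ E] [FiniteDimensional ℝ E]
    {H : Type*} [TopologicalSpace H] {I : ModelWithCorners ℝ E H}
    {G : Type*} [TopologicalSpace G] [ChartedSpace H G] [Group G] [LieGroup I (⊤ : ℕ∞) G]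
    [ConnectedSpace G]
    (f : G → G → ℝ) (hf : ContMDiff (I.prod I) 𝓘(ℝ) (⊤ : ℕ∞) (fun p : G × G => f p.1 p.2))
    (m : G → E →ₗ[ℝ] E →ₗ[ℝ] ℝ) (hm : IsRiemMetric m)
    (gradf : G → G → E) (hgrad : IsGradFst I m f gradf) :
    ((LeftInvCost f → LeftInvMetric I m →
      ∀ u : ℝ → E, ContDiff ℝ (⊤ : ℕ∞) u → ∀ X Xh : ℝ → G,
        SolLeftInvSys I u X → SolLeftGradObs I gradf u X Xh →
        ∀ t, cVel I (fun s => (X s)⁻¹ * Xh s) t =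
          TransL I ((X t)⁻¹ * Xh t) 1 (u t) - TransR I ((X t)⁻¹ * Xh t) 1 (u t)
            - gradf ((X t)⁻¹ * Xh t) 1))
    ∧
    ((RightInvCost f → RightInvMetric I m →
      ∀ v : ℝ → E, ContDiff ℝ (⊤ : ℕ∞) v → ∀ X Xh : ℝ → G,
        SolRightInvSys I v X → SolRightGradObs I gradf v X Xh →
        ∀ t, cVel I (fun s => Xh s * (X s)⁻¹) t =
          TransR I (Xh t * (X t)⁻¹) 1 (v t) - TransL I (Xh t * (X t)⁻¹) 1 (v t)
            - gradf (Xh t * (X t)⁻¹) 1)) := by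
  constructor
  · intro hfL hmL u hu X Xh hX hXh t
    obtain ⟨hXs, hXe⟩ := hX
    obtain ⟨hXhs, hXhe⟩ := hXh
    have hEs : ContMDiff 𝓘(ℝ) I (⊤ : ℕ∞) (fun s => (X s)⁻¹ * Xh s) := (hXs.inv).mul hXhs
    have hfunXh : Xh = fun s => X s * ((X s)⁻¹ * Xh s) := by
      funext s; rw [mul_inv_cancel_left]
    have hleib := cVel_mul X (fun s => (X s)⁻¹ * Xh s) hXs hEs t
    have hcv : cVel I Xh t = cVel I (fun s => X s * ((X s)⁻¹ * Xh s)) t := by rw [← hfunXh]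
    set a := X t with ha
    set b := Xh t with hb
    have hε : a * (a⁻¹ * b) = b := by rw [mul_inv_cancel_left]
    have h4 : TransL I a (a⁻¹ * b) (cVel I (fun s => (X s)⁻¹ * Xh s) t)
        = cVel I Xh t - TransR I (a⁻¹ * b) a (cVel I X t) := by
      rw [hcv, hleib]; abel
    have h1 : TransL I a (a⁻¹ * b) (TransL I (a⁻¹ * b) 1 (u t)) = TransL I b 1 (u t) := by
      have hc := transL_comp (I := I) a (a⁻¹ * b) 1
      rw [mul_one] at hc
      have h := congrArg (fun T : E →L[ℝ] E => T (u t)) hc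
      simp only [ContinuousLinearMap.coe_comp', Function.comp_apply] at h
      rw [h, hε]
    have h2 : TransL I a (a⁻¹ * b) (TransR I (a⁻¹ * b) 1 (u t))
        = TransR I (a⁻¹ * b) a (TransL I a 1 (u t)) := by
      have hc := transLR_comm (I := I) a (a⁻¹ * b) 1
      rw [one_mul, mul_one] at hc
      have h := congrArg (fun T : E →L[ℝ] E => T (u t)) hc
      simpa using h
    have h3 : TransL I a (a⁻¹ * b) (gradf (a⁻¹ * b) 1) = gradf b a := by
      have h := grad_eqv_left hf hm hgrad hfL hmL a (a⁻¹ * b) 1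
      rw [mul_one, hε] at h
      exact h.symm
    apply transL_inj (I := I) a (a⁻¹ * b)
    rw [map_sub, map_sub, h1, h2, h3, h4, hXe t, hXhe t, ← ha, ← hb]
    abel
  · intro hfR hmR v hv X Xh hX hXh t
    obtain ⟨hXs, hXe⟩ := hX
    obtain ⟨hXhs, hXhe⟩ := hXh
    have hEs : ContMDiff 𝓘(ℝ) I (⊤ : ℕ∞) (fun s => Xh s * (X s)⁻¹) := hXhs.mul (hXs.inv)
    have hfunXh : Xh = fun s => (Xh s * (X s)⁻¹) * X s := by
      funext s; rw [inv_mul_cancel_right]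
    have hleib := cVel_mul (fun s => Xh s * (X s)⁻¹) X hEs hXs t
    have hcv : cVel I Xh t = cVel I (fun s => (Xh s * (X s)⁻¹) * X s) t := by rw [← hfunXh]
    set a := X t with ha
    set b := Xh t with hb
    have hε : (b * a⁻¹) * a = b := by rw [inv_mul_cancel_right]
    have h4 : TransR I a (b * a⁻¹) (cVel I (fun s => Xh s * (X s)⁻¹) t)
        = cVel I Xh t - TransL I (b * a⁻¹) a (cVel I X t) := by
      rw [hcv, hleib]; abel
    have h1 : TransR I a (b * a⁻¹) (TransR I (b * a⁻¹) 1 (v t)) = TransR I b 1 (v t) := by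
      have hc := transR_comp (I := I) a (b * a⁻¹) 1
      rw [one_mul] at hc
      have h := congrArg (fun T : E →L[ℝ] E => T (v t)) hc
      simp only [ContinuousLinearMap.coe_comp', Function.comp_apply] at h
      rw [h, hε]
    have h2 : TransR I a (b * a⁻¹) (TransL I (b * a⁻¹) 1 (v t))
        = TransL I (b * a⁻¹) a (TransR I a 1 (v t)) := by
      have hc := transLR_comm (I := I) (b * a⁻¹) a 1
      rw [one_mul, mul_one] at hc
      have h := congrArg (fun T : E →L[ℝ] E => T (v t)) hc.symm
      simpa using h
    have h3 : TransR I a (b * a⁻¹) (gradf (b * a⁻¹) 1) = gradf b a := by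
      have h := grad_eqv_right hf hm hgrad hfR hmR a (b * a⁻¹) 1
      rw [one_mul, hε] at h
      exact h.symm
    apply transR_inj (I := I) a (b * a⁻¹)
    rw [map_sub, map_sub, h1, h2, h3, h4, hXe t, hXhe t, ← ha, ← hb]
    abel
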